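/- arXiv:0911.3816 — 2 statements merged into one kernel-verified Lean document; each statement's English description precedes it below -/
import Mathlib

section
/- Let n ≥ 1, let C > 0, and define Ĝ(r,t) = C t^{-n/2} e^{-r²/(Ct)} for r ≥ 0, t > 0, extended by 0 for t ≤ 0. Then for every q with 1 < q < (n+2)/(n+1) there exists a finite constant C' = C'(n,q,C) such that for all (ξ,τ) ∈ ℝⁿ × (−1,0], (∫_{−1}^{0} ∫_{ℝⁿ} ((τ−ζ)^{-1/2} Ĝ(|ξ−η|, τ−ζ))^q dη dζ)^{1/q} ≤ C'. -/
/-!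
For `s = τ - ζ > 0` the `q`-th power of `s^{-1/2} Ĝ(|ξ - η|, s)` is a Gaussian in `η`, whose
integral over `ℝⁿ` is `C^q (πC/q)^{n/2} s^{n/2 - q(n+1)/2}`. Since `τ ≤ 0`, the times `s > 0`
that occur lie in `(0, 1)`, and the exponent exceeds `-1` exactly when `q < (n+2)/(n+1)`, so the
remaining integral in `s` is bounded by `C^q (πC/q)^{n/2} / (n/2 - q(n+1)/2 + 1)`, uniformly in
`(ξ, τ)`.
-/

open MeasureTheory Real Set

noncomputable def gaussianKernel (n : ℕ) (C r t : ℝ) : ℝ :=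
  if 0 < t then C * t ^ (-(n : ℝ) / 2) * exp (-r ^ 2 / (C * t)) else 0

noncomputable def weightedGaussianKernel (n : ℕ) (C r t : ℝ) : ℝ :=
  t ^ (-(1 : ℝ) / 2) * gaussianKernel n C r t

@[fun_prop]
theorem Measurable.weightedGaussianKernel {α : Type*} [MeasurableSpace α] {n : ℕ} {C : ℝ}
    {f g : α → ℝ} (hf : Measurable f) (hg : Measurable g) :
    Measurable fun x => _root_.weightedGaussianKernel n C (f x) (g x) :=
  (hg.pow_const _).mul (.ite (measurableSet_lt measurable_const hg) (by fun_prop) measurable_const)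

theorem weightedGaussianKernel_nonneg {n : ℕ} {C : ℝ} (hC : 0 ≤ C) (r t : ℝ) :
    0 ≤ weightedGaussianKernel n C r t := by
  unfold weightedGaussianKernel gaussianKernel
  split_ifs with ht
  · positivity
  · rw [mul_zero]

theorem weightedGaussianKernel_rpow_of_pos {n : ℕ} {C t : ℝ} (hC : 0 ≤ C) (ht : 0 < t)
    (r q : ℝ) :
    weightedGaussianKernel n C r t ^ q =
      C ^ q * t ^ (-(q * (n + 1) / 2)) * exp (-(q / (C * t)) * r ^ 2) := by
  rw [weightedGaussianKernel, gaussianKernel, if_pos ht, mul_rpow (by positivity) (by positivity),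
    mul_rpow (by positivity) (exp_pos _).le, mul_rpow hC (by positivity), ← rpow_mul ht.le,
    ← rpow_mul ht.le, ← exp_mul, show -r ^ 2 / (C * t) * q = -(q / (C * t)) * r ^ 2 by ring,
    show -(q * (n + 1) / 2) = -1 / 2 * q + -n / 2 * q by ring, rpow_add ht]
  ring

theorem weightedGaussianKernel_rpow_of_nonpos {n : ℕ} {C t : ℝ} (ht : t ≤ 0) (r : ℝ) {q : ℝ}
    (hq : q ≠ 0) : weightedGaussianKernel n C r t ^ q = 0 := by
  rw [weightedGaussianKernel, gaussianKernel, if_neg ht.not_gt, mul_zero, zero_rpow hq]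

theorem lintegral_Ioo_zero_one_rpow {β : ℝ} (hβ : -1 < β) :
    ∫⁻ t in Ioo (0 : ℝ) 1, ENNReal.ofReal (t ^ β) = ENNReal.ofReal (1 / (β + 1)) := by
  rw [← ofReal_integral_eq_lintegral_ofReal
      ((intervalIntegral.integrableOn_Ioo_rpow_iff one_pos).2 hβ)
      ((ae_restrict_mem measurableSet_Ioo).mono fun t ht => rpow_nonneg ht.1.le _),
    ← integral_Ioc_eq_integral_Ioo, ← intervalIntegral.integral_of_le zero_le_one,
    integral_rpow (Or.inl hβ), one_rpow, zero_rpow (by linarith), sub_zero]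

theorem setLIntegral_Ioo_indicator_Ioi_sub_le {τ : ℝ} (hτ : τ ≤ 0) (g : ℝ → ENNReal) :
    ∫⁻ ζ in Ioo (-1 : ℝ) 0, (Ioi 0).indicator g (τ - ζ) ≤ ∫⁻ t in Ioo (0 : ℝ) 1, g t := by
  rw [(Measure.measurePreserving_sub_left volume τ).setLIntegral_comp_emb
    (MeasurableEquiv.subLeft τ).measurableEmbedding, image_const_sub_Ioo,
    setLIntegral_indicator measurableSet_Ioi]
  exact lintegral_mono_set fun t ht => ⟨ht.1, by linarith [ht.2.2]⟩

section InnerProductSpace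

variable {V : Type*} [NormedAddCommGroup V] [InnerProductSpace ℝ V] [FiniteDimensional ℝ V]
  [MeasurableSpace V] [BorelSpace V]

theorem lintegral_exp_neg_mul_sq_norm_sub {b : ℝ} (hb : 0 < b) (ξ : V) :
    ∫⁻ η, ENNReal.ofReal (exp (-b * ‖ξ - η‖ ^ 2)) =
      ENNReal.ofReal ((π / b) ^ (Module.finrank ℝ V / 2 : ℝ)) := by
  have hint : Integrable fun v : V => exp (-b * ‖v‖ ^ 2) := .of_integral_ne_zero <| by
    rw [GaussianFourier.integral_rexp_neg_mul_sq_norm hb]; positivity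
  rw [lintegral_sub_left_eq_self (fun v => ENNReal.ofReal (exp (-b * ‖v‖ ^ 2))) ξ,
    ← ofReal_integral_eq_lintegral_ofReal hint (ae_of_all _ fun _ => (exp_pos _).le),
    GaussianFourier.integral_rexp_neg_mul_sq_norm hb]

theorem lintegral_weightedGaussianKernel_rpow {n : ℕ} (hV : Module.finrank ℝ V = n)
    {C q t : ℝ} (hC : 0 < C) (hq : 0 < q) (ht : 0 < t) (ξ : V) :
    ∫⁻ η, ENNReal.ofReal (weightedGaussianKernel n C ‖ξ - η‖ t ^ q) =
      ENNReal.ofReal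
        (C ^ q * (π * C / q) ^ ((n : ℝ) / 2) * t ^ ((n : ℝ) / 2 - q * (n + 1) / 2)) := by
  simp_rw [weightedGaussianKernel_rpow_of_pos hC.le ht,
    ENNReal.ofReal_mul (by positivity : 0 ≤ C ^ q * t ^ (-(q * (n + 1) / 2)))]
  rw [lintegral_const_mul' _ _ ENNReal.ofReal_ne_top, lintegral_exp_neg_mul_sq_norm_sub
    (by positivity), hV, ← ENNReal.ofReal_mul (by positivity),
    show π / (q / (C * t)) = π * C / q * t by field_simp, mul_rpow (by positivity) ht.le,
    sub_eq_neg_add, rpow_add ht]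
  ring_nf

theorem lintegral_weightedGaussianKernel_rpow_le {n : ℕ} (hV : Module.finrank ℝ V = n)
    {C q τ : ℝ} (hC : 0 < C) (hq : 0 < q) (hqn : q * (n + 1) < n + 2) (hτ : τ ≤ 0) (ξ : V) :
    ∫⁻ p in univ ×ˢ Ioo (-1 : ℝ) 0,
        ENNReal.ofReal (weightedGaussianKernel n C ‖ξ - p.1‖ (τ - p.2) ^ q) ≤
      ENNReal.ofReal
        (C ^ q * (π * C / q) ^ ((n : ℝ) / 2) / ((n : ℝ) / 2 - q * (n + 1) / 2 + 1)) := by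
  set K := C ^ q * (π * C / q) ^ ((n : ℝ) / 2)
  set β := (n : ℝ) / 2 - q * (n + 1) / 2
  have hβ : -1 < β := by simp only [β]; linarith
  have hinner : ∀ ζ : ℝ,
      ∫⁻ η, ENNReal.ofReal (weightedGaussianKernel n C ‖ξ - η‖ (τ - ζ) ^ q) =
        (Ioi 0).indicator (fun t => ENNReal.ofReal (K * t ^ β)) (τ - ζ) := by
    intro ζ
    by_cases h : 0 < τ - ζ
    · rw [indicator_of_mem (mem_Ioi.2 h), lintegral_weightedGaussianKernel_rpow hV hC hq h]
    · simp_rw [indicator_of_notMem (mt mem_Ioi.1 h),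
        weightedGaussianKernel_rpow_of_nonpos (not_lt.1 h) _ hq.ne', ENNReal.ofReal_zero,
        lintegral_zero]
  rw [Measure.volume_eq_prod, ← Measure.prod_restrict, Measure.restrict_univ,
    lintegral_prod_symm _ (by fun_prop)]
  calc ∫⁻ ζ in Ioo (-1 : ℝ) 0, ∫⁻ η,
          ENNReal.ofReal (weightedGaussianKernel n C ‖ξ - η‖ (τ - ζ) ^ q)
      = ∫⁻ ζ in Ioo (-1 : ℝ) 0, (Ioi 0).indicator (fun t => ENNReal.ofReal (K * t ^ β)) (τ - ζ) :=
        lintegral_congr hinner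
    _ ≤ ∫⁻ t in Ioo (0 : ℝ) 1, ENNReal.ofReal (K * t ^ β) :=
        setLIntegral_Ioo_indicator_Ioi_sub_le hτ _
    _ = ENNReal.ofReal (K / (β + 1)) := by
        simp_rw [ENNReal.ofReal_mul (by positivity : 0 ≤ K)]
        rw [lintegral_const_mul' _ _ ENNReal.ofReal_ne_top, lintegral_Ioo_zero_one_rpow hβ,
          ← ENNReal.ofReal_mul (by positivity), mul_one_div]

end InnerProductSpace

theorem setIntegral_weightedGaussianKernel_rpow_le {n : ℕ} {C q τ : ℝ} (hC : 0 < C)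
    (hq : 0 < q) (hqn : q * (n + 1) < n + 2) (hτ : τ ≤ 0) (ξ : EuclideanSpace ℝ (Fin n)) :
    ∫ p in univ ×ˢ Ioo (-1 : ℝ) 0, weightedGaussianKernel n C ‖ξ - p.1‖ (τ - p.2) ^ q ≤
      C ^ q * (π * C / q) ^ ((n : ℝ) / 2) / ((n : ℝ) / 2 - q * (n + 1) / 2 + 1) := by
  rw [integral_eq_lintegral_of_nonneg_ae
    (ae_of_all _ fun p => rpow_nonneg (weightedGaussianKernel_nonneg hC.le _ _) _)
    (by fun_prop : Measurable _).aestronglyMeasurable]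
  exact ENNReal.toReal_le_of_le_ofReal (div_nonneg (by positivity) (by linarith))
    (lintegral_weightedGaussianKernel_rpow_le finrank_euclideanSpace_fin hC hq hqn hτ ξ)

theorem dirichlet_kernel_Lq_bound_general (n : ℕ) (C : ℝ) (hC : 0 < C)
    (q : ℝ) (hq : 1 < q) (hq' : q < ((n : ℝ) + 2) / ((n : ℝ) + 1))
    (Ghat : ℝ → ℝ → ℝ)
    (hGpos : ∀ (r t : ℝ), 0 < t →
      Ghat r t = C * t ^ (-(n : ℝ) / 2) * Real.exp (-r ^ 2 / (C * t)))
    (hGnonpos : ∀ (r t : ℝ), t ≤ 0 → Ghat r t = 0) :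
    ∃ C' : ℝ, 0 < C' ∧ ∀ (ξ : EuclideanSpace ℝ (Fin n)) (τ : ℝ), τ ∈ Set.Ioc (-1 : ℝ) 0 →
      (∫ p in (Set.univ ×ˢ Set.Ioo (-1:ℝ) 0 : Set (EuclideanSpace ℝ (Fin n) × ℝ)),
          ((τ - p.2) ^ (-(1:ℝ) / 2) * Ghat ‖ξ - p.1‖ (τ - p.2)) ^ q) ^ (1 / q) ≤ C' := by
  obtain rfl : Ghat = gaussianKernel n C := by
    ext r t
    unfold gaussianKernel
    split_ifs with ht
    · exact hGpos r t ht
    · exact hGnonpos r t (not_lt.1 ht)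
  have hq0 : 0 < q := by linarith
  have hqn : q * (n + 1) < n + 2 := (lt_div_iff₀ (by positivity)).1 hq'
  refine ⟨(C ^ q * (π * C / q) ^ ((n : ℝ) / 2) / ((n : ℝ) / 2 - q * (n + 1) / 2 + 1)) ^ (1 / q),
    rpow_pos_of_pos (div_pos (by positivity) (by linarith)) _, fun ξ τ hτ => ?_⟩
  exact rpow_le_rpow
    (integral_nonneg fun p => rpow_nonneg (weightedGaussianKernel_nonneg hC.le _ _) _)
    (setIntegral_weightedGaussianKernel_rpow_le hC hq0 hqn hτ.2 ξ) (by positivity)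

theorem dirichlet_kernel_Lq_bound (n : ℕ) (hn : 1 ≤ n) (C : ℝ) (hC : 0 < C)
    (q : ℝ) (hq : 1 < q) (hq' : q < ((n : ℝ) + 2) / ((n : ℝ) + 1))
    (Ghat : ℝ → ℝ → ℝ)
    (hGpos : ∀ (r t : ℝ), 0 < t →
      Ghat r t = C * t ^ (-(n : ℝ) / 2) * Real.exp (-r ^ 2 / (C * t)))
    (hGnonpos : ∀ (r t : ℝ), t ≤ 0 → Ghat r t = 0) :
    ∃ C' : ℝ, 0 < C' ∧ ∀ (ξ : EuclideanSpace ℝ (Fin n)) (τ : ℝ), τ ∈ Set.Ioc (-1 : ℝ) 0 →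
      (∫ p in (Set.univ ×ˢ Set.Ioo (-1:ℝ) 0 : Set (EuclideanSpace ℝ (Fin n) × ℝ)),
          ((τ - p.2) ^ (-(1:ℝ) / 2) * Ghat ‖ξ - p.1‖ (τ - p.2)) ^ q) ^ (1 / q) ≤ C' :=
  dirichlet_kernel_Lq_bound_general n C hC q hq hq' Ghat hGpos hGnonpos
end

section
/- Let G be a nonnegative kernel on Ω × Ω × (0,∞) satisfying ∫_Ω G(x,y,t) dy ≤ 1 for all x ∈ Ω and t > 0, and possessing the semigroup/comparison property used for the Dirichlet heat kernel. Suppose G(x,y,t) ≤ (ρ(x)/√t ∧ 1)(ρ(y)/√t ∧ 1) Ĝ(|x−y|,t) for x,y ∈ Ω, 0 < t ≤ T, where Ĝ(r,t) = C t^{-n/2}e^{-r²/(Ct)} and ρ(x) = dist(x,∂Ω). Then for any finite positive measure with density w(y) ≥ 0 satisfying ∫_Ω w(y)ρ(y) dy ≤ M, one has ∫_Ω G(x,y,t) w(y) dy ≤ C' M (ρ(x)/√t ∧ 1) t^{-(n+1)/2} for all x ∈ Ω and 0 < t ≤ T, where C' depends only on n and C. -/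
open MeasureTheory Real Set Metric Filter

/-! Bounding `min (ρ y / √t) 1` by `ρ y / √t` and the Gaussian `Ĝ` by its peak `C t^{-n/2}` gives
`G x y t * w y ≤ C min (ρ x / √t) 1 t^{-(n+1)/2} * (w y * ρ y)` pointwise; integrating against
`∫ w ρ ≤ M` yields the claim with `C' = C`. -/

lemma mul_exp_neg_sq_div_le {a b : ℝ} (ha : 0 ≤ a) (hb : 0 ≤ b) (r : ℝ) :
    a * exp (-r ^ 2 / b) ≤ a :=
  mul_le_of_le_one_right ha <| exp_le_one_iff.mpr <|
    div_nonpos_of_nonpos_of_nonneg (neg_nonpos.mpr (sq_nonneg r)) hb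

lemma rpow_neg_half_div_sqrt {t : ℝ} (ht : 0 < t) (a : ℝ) :
    t ^ (-a / 2) / √t = t ^ (-(a + 1) / 2) := by
  rw [sqrt_eq_rpow, ← rpow_sub ht]
  ring_nf

lemma setIntegral_le_mul_of_le_mul {α : Type*} [MeasurableSpace α] {μ : Measure α}
    {s : Set α} (hs : MeasurableSet s) {f g : α → ℝ} {K M : ℝ} (hK : 0 ≤ K)
    (hf : ∀ y ∈ s, 0 ≤ f y) (hfg : ∀ y ∈ s, f y ≤ K * g y) (hg : IntegrableOn g s μ)
    (hgM : ∫ y in s, g y ∂μ ≤ M) :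
    ∫ y in s, f y ∂μ ≤ K * M :=
  calc ∫ y in s, f y ∂μ ≤ ∫ y in s, K * g y ∂μ :=
        integral_mono_of_nonneg (ae_restrict_of_forall_mem hs hf) (hg.const_mul K)
          (ae_restrict_of_forall_mem hs hfg)
    _ = K * ∫ y in s, g y ∂μ := integral_const_mul K _
    _ ≤ K * M := mul_le_mul_of_nonneg_left hgM hK

lemma mul_le_of_le_boundary_factors {g w a b s k A : ℝ} (hs : 0 < s) (ha : 0 ≤ a)
    (hb : 0 ≤ b) (hw : 0 ≤ w) (hk : 0 ≤ k) (hkA : k ≤ A)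
    (hg : g ≤ min (a / s) 1 * min (b / s) 1 * k) :
    g * w ≤ min (a / s) 1 * A / s * (w * b) := by
  have hmin : 0 ≤ min (a / s) 1 := le_min (by positivity) zero_le_one
  calc g * w ≤ min (a / s) 1 * (b / s) * A * w := by
        gcongr
        exact hg.trans (mul_le_mul (by gcongr; exact min_le_left _ _) hkA hk (by positivity))
    _ = min (a / s) 1 * A / s * (w * b) := by ring

theorem kernel_weighted_bound_general (n : ℕ) (T C M : ℝ)
    (hC : 0 < C)
    (Ω : Set (EuclideanSpace ℝ (Fin n))) (hΩo : IsOpen Ω)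
    (ρ : EuclideanSpace ℝ (Fin n) → ℝ)
    (hρ : ∀ x, ρ x = Metric.infDist x (frontier Ω))
    (Ghat : ℝ → ℝ → ℝ)
    (hGhat : ∀ (r t : ℝ), 0 < t →
      Ghat r t = C * t ^ (-(n : ℝ) / 2) * Real.exp (-r ^ 2 / (C * t)))
    (G : EuclideanSpace ℝ (Fin n) → EuclideanSpace ℝ (Fin n) → ℝ → ℝ)
    (hG0 : ∀ x y t, 0 ≤ G x y t)
    (hGbd : ∀ x ∈ Ω, ∀ y ∈ Ω, ∀ t ∈ Set.Ioc (0:ℝ) T,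
      G x y t ≤ min (ρ x / Real.sqrt t) 1 * min (ρ y / Real.sqrt t) 1
        * Ghat ‖x - y‖ t)
    (w : EuclideanSpace ℝ (Fin n) → ℝ) (hw0 : ∀ y, 0 ≤ w y)
    (hwint : IntegrableOn (fun y => w y * ρ y) Ω)
    (hwM : ∫ y in Ω, w y * ρ y ≤ M) :
    ∃ C' : ℝ, 0 < C' ∧ ∀ x ∈ Ω, ∀ t ∈ Set.Ioc (0:ℝ) T,
      ∫ y in Ω, G x y t * w y
        ≤ C' * M * min (ρ x / Real.sqrt t) 1 * t ^ (-((n : ℝ) + 1) / 2) := by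
  refine ⟨C, hC, fun x hx t ⟨ht0, htT⟩ => ?_⟩
  have hρ0 : ∀ y, 0 ≤ ρ y := fun y => (hρ y).symm ▸ infDist_nonneg
  have hGhat0 : ∀ r, 0 ≤ Ghat r t := fun r => by rw [hGhat r t ht0]; positivity
  have hGhat_le : ∀ r, Ghat r t ≤ C * t ^ (-(n : ℝ) / 2) := fun r => by
    rw [hGhat r t ht0]
    exact mul_exp_neg_sq_div_le (by positivity) (by positivity) r
  have hmin : 0 ≤ min (ρ x / √t) 1 := le_min (by have := hρ0 x; positivity) zero_le_one
  calc ∫ y in Ω, G x y t * w y ≤ min (ρ x / √t) 1 * (C * t ^ (-(n : ℝ) / 2)) / √t * M :=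
        setIntegral_le_mul_of_le_mul hΩo.measurableSet (by positivity)
          (fun y _ => mul_nonneg (hG0 x y t) (hw0 y))
          (fun y hy => mul_le_of_le_boundary_factors (sqrt_pos.2 ht0) (hρ0 x) (hρ0 y) (hw0 y)
            (hGhat0 _) (hGhat_le _) (hGbd x hx y hy t ⟨ht0, htT⟩))
          hwint hwM
    _ = C * M * min (ρ x / √t) 1 * (t ^ (-(n : ℝ) / 2) / √t) := by ring
    _ = C * M * min (ρ x / √t) 1 * t ^ (-((n : ℝ) + 1) / 2) := by
        rw [rpow_neg_half_div_sqrt ht0]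

theorem kernel_weighted_bound (n : ℕ) (hn : 1 ≤ n) (T C M : ℝ)
    (hT : 0 < T) (hC : 0 < C) (hM : 0 ≤ M)
    (Ω : Set (EuclideanSpace ℝ (Fin n))) (hΩo : IsOpen Ω)
    (hΩb : Bornology.IsBounded Ω) (hΩne : Ω.Nonempty)
    (ρ : EuclideanSpace ℝ (Fin n) → ℝ)
    (hρ : ∀ x, ρ x = Metric.infDist x (frontier Ω))
    (Ghat : ℝ → ℝ → ℝ)
    (hGhat : ∀ (r t : ℝ), 0 < t →
      Ghat r t = C * t ^ (-(n : ℝ) / 2) * Real.exp (-r ^ 2 / (C * t)))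
    (G : EuclideanSpace ℝ (Fin n) → EuclideanSpace ℝ (Fin n) → ℝ → ℝ)
    (hG0 : ∀ x y t, 0 ≤ G x y t)
    (hGmass : ∀ x ∈ Ω, ∀ t : ℝ, 0 < t → ∫ y in Ω, G x y t ≤ 1)
    (hGbd : ∀ x ∈ Ω, ∀ y ∈ Ω, ∀ t ∈ Set.Ioc (0:ℝ) T,
      G x y t ≤ min (ρ x / Real.sqrt t) 1 * min (ρ y / Real.sqrt t) 1
        * Ghat ‖x - y‖ t)
    (w : EuclideanSpace ℝ (Fin n) → ℝ) (hw0 : ∀ y, 0 ≤ w y)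
    (hwmeas : Measurable w)
    (hwint : IntegrableOn (fun y => w y * ρ y) Ω)
    (hwM : ∫ y in Ω, w y * ρ y ≤ M) :
    ∃ C' : ℝ, 0 < C' ∧ ∀ x ∈ Ω, ∀ t ∈ Set.Ioc (0:ℝ) T,
      ∫ y in Ω, G x y t * w y
        ≤ C' * M * min (ρ x / Real.sqrt t) 1 * t ^ (-((n : ℝ) + 1) / 2) :=
  kernel_weighted_bound_general n T C M hC Ω hΩo ρ hρ Ghat hGhat G hG0 hGbd w hw0 hwint hwM
end
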